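/- Let M and M̃ be smooth orientable 3-manifolds carrying 1-adapted bi-contact coframings (ω¹,ω²,ω³) and (ω̃¹,ω̃²,ω̃³) with the same sign ε = ±1, and let Φ : M → M̃ be a diffeomorphism such that Φ*ω̃¹ = f ω¹ and Φ*ω̃² = g ω² for nowhere-vanishing smooth functions f, g on M. Then f² = g², i.e. g = ±f; in other words, every bi-contactomorphism acts as a homothety on the 1-adapted contact 1-forms. -/

import Mathlib

/-!
An abstract framework for the (truncated) exterior algebra of differential forms
on a smooth manifold whose underlying point set is `M`.  Smooth functions are
modeled by elements of `M → ℝ`; the modules `Ω1`, `Ω2`, `Ω3` model the spaces of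
smooth differential 1-, 2- and 3-forms, `d0, d1, d2` model the exterior
derivative and `w11, w12` the wedge products, subject to the usual identities
(Leibniz rules, `d ∘ d = 0`, graded (anti)commutativity, associativity).
-/
structure FormCtx (M : Type*) where
  Ω1 : Type*
  Ω2 : Type*
  Ω3 : Type*
  [acg1 : AddCommGroup Ω1]
  [acg2 : AddCommGroup Ω2]
  [acg3 : AddCommGroup Ω3]
  [mod1 : Module (M → ℝ) Ω1]
  [mod2 : Module (M → ℝ) Ω2]
  [mod3 : Module (M → ℝ) Ω3]
  d0 : (M → ℝ) → Ω1
  d1 : Ω1 → Ω2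
  d2 : Ω2 → Ω3
  w11 : Ω1 → Ω1 → Ω2
  w12 : Ω1 → Ω2 → Ω3
  d0_add : ∀ f g, d0 (f + g) = d0 f + d0 g
  d0_mul : ∀ f g, d0 (f * g) = f • d0 g + g • d0 f
  d1_add : ∀ a b, d1 (a + b) = d1 a + d1 b
  d1_smul : ∀ (f : M → ℝ) a, d1 (f • a) = f • d1 a + w11 (d0 f) a
  d2_add : ∀ a b, d2 (a + b) = d2 a + d2 b
  d2_smul : ∀ (f : M → ℝ) a, d2 (f • a) = f • d2 a + w12 (d0 f) a
  dd0 : ∀ f, d1 (d0 f) = 0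
  dd1 : ∀ a, d2 (d1 a) = 0
  w11_add_left : ∀ a b c, w11 (a + b) c = w11 a c + w11 b c
  w11_smul_left : ∀ (f : M → ℝ) a b, w11 (f • a) b = f • w11 a b
  w11_anticomm : ∀ a b, w11 a b = - w11 b a
  w12_add_left : ∀ a b c, w12 (a + b) c = w12 a c + w12 b c
  w12_add_right : ∀ a b c, w12 a (b + c) = w12 a b + w12 a c
  w12_smul_left : ∀ (f : M → ℝ) a b, w12 (f • a) b = f • w12 a b
  w12_smul_right : ∀ (f : M → ℝ) a b, w12 a (f • b) = f • w12 a b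
  w12_w11 : ∀ a b c, w12 a (w11 b c) = w12 c (w11 a b)
  d_w11 : ∀ a b, d2 (w11 a b) = w12 b (d1 a) - w12 a (d1 b)

attribute [instance] FormCtx.acg1 FormCtx.acg2 FormCtx.acg3
attribute [instance] FormCtx.mod1 FormCtx.mod2 FormCtx.mod3

namespace FormCtx

variable {M : Type*} (F : FormCtx M)

/-- A 3-form is a *volume form* iff it is an `(M → ℝ)`-basis of the module of
3-forms; on a 3-manifold this says exactly that it is nowhere vanishing. -/
def IsVolume (τ : F.Ω3) : Prop := ∀ σ : F.Ω3, ∃! f : M → ℝ, σ = f • τ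

/-- A 1-form `ω` is a contact form iff `ω ∧ dω` is a volume form. -/
def IsContact (ω : F.Ω1) : Prop := F.IsVolume (F.w12 ω (F.d1 ω))

/-- A 2-form on a 3-manifold is nowhere vanishing iff some 1-form wedges
with it to a volume form. -/
def Nvz2 (φ : F.Ω2) : Prop := ∃ α : F.Ω1, F.IsVolume (F.w12 α φ)

/-- `(ω1, ω2)` is a bi-contact structure: both are contact forms and their
contact plane fields are everywhere distinct (`ω1 ∧ ω2` nowhere zero). -/
def IsBiContact (ω1 ω2 : F.Ω1) : Prop :=
  F.IsContact ω1 ∧ F.IsContact ω2 ∧ F.Nvz2 (F.w11 ω1 ω2)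

/-- The 3-form `ω1 ∧ ω2 ∧ ω3`. -/
def vol (ω1 ω2 ω3 : F.Ω1) : F.Ω3 := F.w12 ω1 (F.w11 ω2 ω3)

/-- `(ω1, ω2, ω3)` is a 1-adapted coframing with sign `ε`:
`ω¹ ∧ dω¹ = −ε ω² ∧ dω² = ω¹ ∧ ω² ∧ ω³`, the latter being a volume form. -/
def IsAdapted (ε : ℝ) (ω1 ω2 ω3 : F.Ω1) : Prop :=
  (ε = 1 ∨ ε = -1) ∧ F.IsVolume (F.vol ω1 ω2 ω3) ∧
    F.w12 ω1 (F.d1 ω1) = F.vol ω1 ω2 ω3 ∧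
    F.w12 ω2 (F.d1 ω2) = (fun _ : M => -ε) • F.vol ω1 ω2 ω3

/-- The pencil `ω_a = a₁ ω¹ + a₂ ω²` with constant coefficients. -/
def pencil (ω1 ω2 : F.Ω1) (a1 a2 : ℝ) : F.Ω1 :=
  (fun _ : M => a1) • ω1 + (fun _ : M => a2) • ω2

end FormCtx

/-- Pullback data for a smooth map `Φ : M → N`: the pullback operation on
differential forms, compatible with the module structures, the exterior
derivatives and the wedge products (pullback of functions is `f ∘ Φ`). -/
structure FormPullback {M N : Type*} (F : FormCtx M) (G : FormCtx N) (Φ : M → N) where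
  p1 : G.Ω1 → F.Ω1
  p2 : G.Ω2 → F.Ω2
  p3 : G.Ω3 → F.Ω3
  p1_add : ∀ a b, p1 (a + b) = p1 a + p1 b
  p2_add : ∀ a b, p2 (a + b) = p2 a + p2 b
  p3_add : ∀ a b, p3 (a + b) = p3 a + p3 b
  p1_smul : ∀ (f : N → ℝ) a, p1 (f • a) = (f ∘ Φ) • p1 a
  p2_smul : ∀ (f : N → ℝ) a, p2 (f • a) = (f ∘ Φ) • p2 a
  p3_smul : ∀ (f : N → ℝ) a, p3 (f • a) = (f ∘ Φ) • p3 a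
  p_d0 : ∀ f : N → ℝ, F.d0 (f ∘ Φ) = p1 (G.d0 f)
  p_d1 : ∀ a, F.d1 (p1 a) = p2 (G.d1 a)
  p_d2 : ∀ a, F.d2 (p2 a) = p3 (G.d2 a)
  p_w11 : ∀ a b, p2 (G.w11 a b) = F.w11 (p1 a) (p1 b)
  p_w12 : ∀ a b, p3 (G.w12 a b) = F.w12 (p1 a) (p2 b)

/-!
Pulling back along `Φ`, `η¹ ∧ dη¹` becomes `f² ω¹ ∧ dω¹` and `η² ∧ dη²` becomes `g² ω² ∧ dω²`:
the extra terms `df ∧ ω ∧ ω` vanish. The 1-adapted identities express `η¹ ∧ dη¹` and `η² ∧ dη²`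
as the volume form `η¹ ∧ η² ∧ η³` and `-ε` times it, and likewise on `M`, so comparing
coefficients against the volume form `ω¹ ∧ ω² ∧ ω³` gives `-ε f² = -ε g²`.
-/

theorem eq_zero_of_eq_neg_of_invertible_two {R V : Type*} [Ring R] [Invertible (2 : R)]
    [AddCommGroup V] [Module R V] {v : V} (h : v = -v) : v = 0 := by
  have hsum : v + v = 0 := by nth_rewrite 2 [h]; exact add_neg_cancel v
  rw [← invOf_two_smul_add_invOf_two_smul R v, ← smul_add, hsum, smul_zero]

namespace FormCtx

variable {M : Type*} (F : FormCtx M)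

theorem w12_neg_right (a : F.Ω1) (b : F.Ω2) : F.w12 a (-b) = -F.w12 a b := by
  simpa only [neg_one_smul] using F.w12_smul_right (-1) a b

theorem w12_w11_self (a b : F.Ω1) : F.w12 a (F.w11 b a) = 0 := by
  let _ : Invertible (2 : M → ℝ) := ⟨fun _ => 2⁻¹, by ext; norm_num, by ext; norm_num⟩
  apply eq_zero_of_eq_neg_of_invertible_two (R := M → ℝ)
  rw [← F.w12_neg_right, ← F.w11_anticomm, F.w12_w11]

theorem w12_smul_d1_smul (f : M → ℝ) (ω : F.Ω1) :
    F.w12 (f • ω) (F.d1 (f • ω)) = (f * f) • F.w12 ω (F.d1 ω) := by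
  rw [F.d1_smul, F.w12_smul_left, F.w12_add_right, F.w12_smul_right, F.w12_w11_self, add_zero,
    smul_smul]

variable {F} in
theorem IsVolume.smul_left_injective {τ : F.Ω3} (hτ : F.IsVolume τ) :
    Function.Injective (· • τ : (M → ℝ) → F.Ω3) := fun f _ hfg =>
  (hτ (f • τ)).unique rfl hfg

end FormCtx

theorem FormPullback.p3_w12_d1 {M N : Type*} {F : FormCtx M} {G : FormCtx N} {Φ : M → N}
    (P : FormPullback F G Φ) (η : G.Ω1) :
    P.p3 (G.w12 η (G.d1 η)) = F.w12 (P.p1 η) (F.d1 (P.p1 η)) := by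
  rw [P.p_w12, P.p_d1]

theorem bicontactomorphisms_are_homotheties_general
    {M N : Type*} (F : FormCtx M) (G : FormCtx N)
    (ε : ℝ) (ω1 ω2 ω3 : F.Ω1) (η1 η2 η3 : G.Ω1)
    (hadF : F.IsAdapted ε ω1 ω2 ω3) (hadG : G.IsAdapted ε η1 η2 η3)
    (Φ : M → N) (P : FormPullback F G Φ)
    (f g : M → ℝ)
    (hp1 : P.p1 η1 = f • ω1) (hp2 : P.p1 η2 = g • ω2) :
    f ^ 2 = g ^ 2 := by
  obtain ⟨hε, hvol, hω1, hω2⟩ := hadF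
  obtain ⟨-, -, hη1, hη2⟩ := hadG
  have pull1 : P.p3 (G.vol η1 η2 η3) = (f * f) • F.vol ω1 ω2 ω3 := by
    rw [← hη1, P.p3_w12_d1, hp1, F.w12_smul_d1_smul, hω1]
  have pull2 : (fun _ : M => -ε) • P.p3 (G.vol η1 η2 η3)
      = (g * g * fun _ => -ε) • F.vol ω1 ω2 ω3 := by
    rw [← smul_smul, ← hω2, ← F.w12_smul_d1_smul, ← hp2, ← P.p3_w12_d1, hη2, P.p3_smul]
    rfl -- the constant `-ε` composed with `Φ` is the constant `-ε`
  have hcoef : (fun _ : M => -ε) * (f * f) = g * g * fun _ => -ε :=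
    hvol.smul_left_injective (by dsimp only; rw [← smul_smul, ← pull1, pull2])
  have hε0 : -ε ≠ 0 := by rcases hε with rfl | rfl <;> norm_num
  funext p
  have hp : -ε * (f p * f p) = g p * g p * -ε := congrFun hcoef p
  simpa only [Pi.pow_apply, pow_two] using mul_left_cancel₀ hε0 (hp.trans (mul_comm _ _))

theorem bicontactomorphisms_are_homotheties
    {M N : Type*} (F : FormCtx M) (G : FormCtx N)
    (ε : ℝ) (ω1 ω2 ω3 : F.Ω1) (η1 η2 η3 : G.Ω1)
    (hbcF : F.IsBiContact ω1 ω2) (hbcG : G.IsBiContact η1 η2)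
    (hadF : F.IsAdapted ε ω1 ω2 ω3) (hadG : G.IsAdapted ε η1 η2 η3)
    (Φ : M → N) (hΦ : Function.Bijective Φ) (P : FormPullback F G Φ)
    (f g : M → ℝ) (hf : ∀ p, f p ≠ 0) (hg : ∀ p, g p ≠ 0)
    (hp1 : P.p1 η1 = f • ω1) (hp2 : P.p1 η2 = g • ω2) :
    f ^ 2 = g ^ 2 :=
  bicontactomorphisms_are_homotheties_general F G ε ω1 ω2 ω3 η1 η2 η3 hadF hadG Φ P f g hp1 hp2
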